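/- Given a shift-invariant class K_α[Z] with E[‖Z(0)‖^α] = 1 and local random field Θ, the following are equivalent: (i) ‖Z(0)‖ > 0 almost surely; (ii) for some (and then every) Z̃ ∈ K_α[Z], ‖Z̃(t)‖ > 0 almost surely for every t ∈ T; (iii) ‖Θ(t)‖ > 0 almost surely for every t ∈ T; (iv) Θ ∈ K_α[Z]. -/

import Mathlib

open MeasureTheory ProbabilityTheory Filter Set
open scoped ENNReal Classical

noncomputable section

namespace SIRF

variable {l d : ℕ}

/-- The ambient index space `ℝ^l`. -/
abbrev Tl (l : ℕ) : Type := Fin l → ℝ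

/-- The state space `ℝ^d`. -/
abbrev Ed (d : ℕ) : Type := Fin d → ℝ

/-- Sample paths. -/
abbrev Path (l d : ℕ) : Type := Tl l → Ed d

/-- The integer lattice `ℤ^l` inside `ℝ^l`. -/
def latticeZ (l : ℕ) : Set (Tl l) := {t | ∀ i, ∃ n : ℤ, t i = (n : ℝ)}

/-- The rational points of `ℝ^l`. -/
def ratPoints (l : ℕ) : Set (Tl l) := {t | ∀ i, ∃ q : ℚ, t i = (q : ℝ)}

/-- The hypercube `[-a,a]^l`. -/
def box (a : ℝ) : Set (Tl l) := {t | ∀ i, |t i| ≤ a}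

/-- The quadrant of `t` with sign pattern `ε` (`true` = closed `≥`, `false` = `<`). -/
def quadrant (t : Tl l) (ε : Fin l → Bool) : Set (Tl l) :=
  {s | ∀ i, if ε i then t i ≤ s i else s i < t i}

/-- The backward shift `B^h f = f(· - h)`. -/
def Bshift (h : Tl l) (f : Path l d) : Path l d := fun t => f (t - h)

/-- The setting of the paper: either `𝕋 = ℝ^l` with `λ` Lebesgue measure and `𝔻` the rational
points, or `𝕋 = ℤ^l` with `λ` the counting measure on the lattice and `𝔻 = ℤ^l`. -/
def Setting (S : Set (Tl l)) (μT : Measure (Tl l)) (D : Set (Tl l)) : Prop :=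
  (S = Set.univ ∧ μT = volume ∧ D = ratPoints l) ∨
    (S = latticeZ l ∧ μT = Measure.count.restrict (latticeZ l) ∧ D = latticeZ l)

/-- A 1-homogeneous nonnegative Borel measurable map on `ℝ^d`. -/
def HomNorm (nrm : Ed d → ℝ) : Prop :=
  Measurable nrm ∧ (∀ x, 0 ≤ nrm x) ∧ ∀ c : ℝ, 0 ≤ c → ∀ x : Ed d, nrm (c • x) = c * nrm x

/-- `‖x‖^α` as an extended nonnegative real. -/
def mA (nrm : Ed d → ℝ) (α : ℝ) (x : Ed d) : ℝ≥0∞ := ENNReal.ofReal (nrm x ^ α)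

section RF

variable {Ω : Type*} [MeasurableSpace Ω] {Ω' : Type*} [MeasurableSpace Ω']

/-- Quadrant stochastic continuity: along each quadrant of every point the limits in probability
exist (and are finite), and along the closed upper quadrant the limit is the value itself. -/
def QSC (P : Measure Ω) (f : Ω → Tl l → ℝ) : Prop :=
  ∀ t : Tl l, ∀ ε : Fin l → Bool, ∃ g : Ω → ℝ,
    TendstoInMeasure P (fun s ω => f ω s) (nhdsWithin t (quadrant t ε)) g ∧
      ((∀ i, ε i = true) → g = fun ω => f ω t)

/-- Stochastic continuity. -/
def StochCont (P : Measure Ω) (f : Ω → Tl l → ℝ) : Prop :=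
  ∀ t : Tl l, TendstoInMeasure P (fun s ω => f ω s) (nhds t) (fun ω => f ω t)

/-- `D` is a (countable dense) separant for a nonnegative random field. -/
def SeparantOf (P : Measure Ω) (f : Ω → Tl l → ℝ) (D : Set (Tl l)) : Prop :=
  D.Countable ∧ Dense D ∧
    ∀ U : Set (Tl l), IsOpen U → ∀ᵐ ω ∂P,
      (⨆ t ∈ U ∩ D, ENNReal.ofReal (f ω t)) = ⨆ t ∈ U, ENNReal.ofReal (f ω t)

/-- Membership in the class `𝔚`: a separable, jointly measurable random field whose norm is
quadrant stochastically continuous in the continuous case. -/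
structure IsRF (P : Measure Ω) (S : Set (Tl l)) (nrm : Ed d → ℝ) (Z : Ω → Path l d) : Prop where
  jointMeas : Measurable fun p : Ω × Tl l => nrm (Z p.1 p.2)
  separable : S = Set.univ → ∃ D : Set (Tl l), SeparantOf P (fun ω t => nrm (Z ω t)) D
  qsc : S = Set.univ → QSC P fun ω t => nrm (Z ω t)

/-- Condition (C1): local uniform `α`-moments. -/
def CondC1 (P : Measure Ω) (S : Set (Tl l)) (nrm : Ed d → ℝ) (α : ℝ)
    (Z : Ω → Path l d) : Prop :=
  ∀ a : ℝ, 0 < a → (∫⁻ ω, ⨆ t ∈ S ∩ box a, mA nrm α (Z ω t) ∂P) < ⊤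

/-- `P(sup_{t ∈ 𝕋} ‖Z(t)‖ > 0) = 1`. -/
def PosSup (P : Measure Ω) (S : Set (Tl l)) (nrm : Ed d → ℝ) (Z : Ω → Path l d) : Prop :=
  P {ω | ∃ t ∈ S, 0 < nrm (Z ω t)} = 1

/-- The defining functional identity (boll) of the class `K_α[Z]`. -/
def FunIdent (P : Measure Ω) (P' : Measure Ω') (S : Set (Tl l)) (nrm : Ed d → ℝ) (α : ℝ)
    (Z : Ω → Path l d) (Z' : Ω' → Path l d) : Prop :=
  ∀ h ∈ S, ∀ F : Path l d → ℝ≥0∞, Measurable F →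
    ∫⁻ ω, mA nrm α (Z' ω h) * F (fun t => (nrm (Z' ω h))⁻¹ • Z' ω t) ∂P'
      = ∫⁻ ω, mA nrm α (Z ω h) * F (fun t => (nrm (Z ω h))⁻¹ • Z ω t) ∂P

/-- Membership of `Z'` (on its own probability space) in the class `K_α[Z]`. -/
def MemK (P : Measure Ω) (P' : Measure Ω') (S : Set (Tl l)) (nrm : Ed d → ℝ) (α : ℝ)
    (Z : Ω → Path l d) (Z' : Ω' → Path l d) : Prop :=
  IsRF P' S nrm Z' ∧ CondC1 P' S nrm α Z' ∧ PosSup P' S nrm Z' ∧ FunIdent P P' S nrm α Z Z'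

/-- Shift-invariance of the class `K_α[Z]`: some member has all its shifts in the class. -/
def ShiftInvariantK (P : Measure Ω) (S : Set (Tl l)) (nrm : Ed d → ℝ) (α : ℝ)
    (Z : Ω → Path l d) : Prop :=
  ∃ (Ω' : Type) (_ : MeasurableSpace Ω') (P' : Measure Ω'),
    IsProbabilityMeasure P' ∧ P'.IsComplete ∧
      ∃ Z' : Ω' → Path l d, MemK P P' S nrm α Z Z' ∧
        ∀ h ∈ S, MemK P P' S nrm α Z fun ω => Bshift h (Z' ω)

/-- The tilted probability measure `P̂(A) = E[‖Z(0)‖^α 1_A]`. -/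
def Phat (P : Measure Ω) (nrm : Ed d → ℝ) (α : ℝ) (Z : Ω → Path l d) : Measure Ω :=
  P.withDensity fun ω => mA nrm α (Z ω 0)

/-- The local random field `Θ = Z/‖Z(0)‖` (to be considered under `P̂`). -/
def Theta (nrm : Ed d → ℝ) (Z : Ω → Path l d) : Ω → Path l d :=
  fun ω t => (nrm (Z ω 0))⁻¹ • Z ω t

/-- The `α`-Pareto distribution: `P(R > t) = t^{-α}`, `t ≥ 1`. -/
def paretoMeasure (α : ℝ) : Measure ℝ :=
  volume.withDensity fun r => ENNReal.ofReal (if 1 ≤ r then α * r ^ (-(α + 1)) else 0)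

/-- The measure `ν_α(dz) = α z^{-α-1} dz` on `(0,∞)`. -/
def nuAlpha (α : ℝ) : Measure ℝ :=
  volume.withDensity fun z => ENNReal.ofReal (if 0 < z then α * z ^ (-(α + 1)) else 0)

/-- The tail field `Y = R Θ`, realised on the product of the base space with the Pareto space. -/
def Yrf (nrm : Ed d → ℝ) (Z : Ω → Path l d) : Ω × ℝ → Path l d :=
  fun q t => q.2 • Theta nrm Z q.1 t

/-- The law governing `Y = R Θ`: `P̂ ⊗ Pareto(α)`. -/
def QY (P : Measure Ω) (nrm : Ed d → ℝ) (α : ℝ) (Z : Ω → Path l d) : Measure (Ω × ℝ) :=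
  (Phat P nrm α Z).prod (paretoMeasure α)

end RF

/-- `a`-homogeneous measurable maps on path space (the class `H_a`). -/
def IsHom (a : ℝ) (F : Path l d → ℝ≥0∞) : Prop :=
  Measurable F ∧ ∀ c : ℝ, 0 < c → ∀ f : Path l d, F (c • f) = ENNReal.ofReal (c ^ a) * F f

/-- Generalised càdlàg functions on `ℝ^l`: quadrant limits exist, with the closed upper-quadrant
limit equal to the value. -/
def GenCadlag (g : Tl l → ℝ) : Prop :=
  ∀ t : Tl l, ∀ ε : Fin l → Bool, ∃ c : ℝ,
    Tendsto g (nhdsWithin t (quadrant t ε)) (nhds c) ∧ ((∀ i, ε i = true) → c = g t)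

/-- `I(f,g) = ∫_𝕋 ‖f(t)‖^β g(t) λ(dt)`. -/
def Ifun (μT : Measure (Tl l)) (nrm : Ed d → ℝ) (β : ℝ) (g : Tl l → ℝ) (f : Path l d) : ℝ≥0∞ :=
  ∫⁻ t, ENNReal.ofReal (nrm (f t) ^ β) * ENNReal.ofReal (g t) ∂μT

/-- The class `𝔥_a` of the paper. -/
def MemFrakH (S : Set (Tl l)) (μT : Measure (Tl l)) (nrm : Ed d → ℝ) (a : ℝ)
    (F : Path l d → ℝ≥0∞) : Prop :=
  ∃ β : ℝ, 0 ≤ β ∧ ∃ g : Tl l → ℝ, (∀ t, 0 ≤ g t) ∧ (∃ t ∈ S, 0 < g t) ∧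
    (S = Set.univ → GenCadlag g) ∧
    ((∃ (Γa Γb : Path l d → ℝ≥0∞) (c : ℝ≥0∞), IsHom a Γa ∧ IsHom β Γb ∧ c ≠ ⊤ ∧
        (∀ f, Γb f ≤ c) ∧ ∀ f, F f = Γa f * Γb f / Ifun μT nrm β g f) ∨
      (∃ Γa : Path l d → ℝ≥0∞, IsHom a Γa ∧
        ∃ A ∈ ({{0}, {x | 0 < x ∧ x ≠ ⊤}, {⊤}} : Set (Set ℝ≥0∞)),
          ∀ f, F f = Γa f * A.indicator (fun _ => 1) (Ifun μT nrm β g f)))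

/-- The class `H̃` of products of an `𝔥_a`-map with a measurable map. -/
def MemTildeH (S : Set (Tl l)) (μT : Measure (Tl l)) (nrm : Ed d → ℝ)
    (F : Path l d → ℝ≥0∞) : Prop :=
  ∃ a : ℝ, 0 ≤ a ∧ ∃ F₁ F₂ : Path l d → ℝ≥0∞,
    MemFrakH S μT nrm a F₁ ∧ Measurable F₂ ∧ ∀ f, F f = F₁ f * F₂ f

/-- The class `𝒫_𝔻`: strictly positive probability densities on `D` (counting measure). -/
def MemPD (D : Set (Tl l)) (p : Tl l → ℝ) : Prop :=
  (∀ t ∈ D, 0 < p t) ∧ (∫⁻ t in D, ENNReal.ofReal (p t) ∂Measure.count) = 1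

/-- The class `𝒫_𝕋`: strictly positive (càdlàg in the continuous case) probability densities
on `𝕋`. -/
def MemPT (S : Set (Tl l)) (μT : Measure (Tl l)) (p : Tl l → ℝ) : Prop :=
  (∀ t ∈ S, 0 < p t) ∧ (S = Set.univ → GenCadlag p) ∧ (∫⁻ t, ENNReal.ofReal (p t) ∂μT) = 1

section Tail

variable {Ω : Type*} [MeasurableSpace Ω]

/-- The integrability condition (justen). -/
def Justen (Q : Measure Ω) (D : Set (Tl l)) (μD : Measure (Tl l)) (nrm : Ed d → ℝ) (α : ℝ)
    (V : Ω → Path l d) : Prop :=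
  ∀ p : Tl l → ℝ, (∀ t ∈ D, 0 < p t) → (∫⁻ t in D, ENNReal.ofReal (p t) ∂μD) = 1 →
    ∀ a : ℝ, 0 < a →
      (∫⁻ t in D, (∫⁻ ω,
            (⨆ s ∈ D ∩ box a, mA nrm α (V ω (s - t))) /
              (∫⁻ r in D, mA nrm α (V ω (r - t)) * ENNReal.ofReal (p r) ∂μD) ∂Q)
          * ENNReal.ofReal (p t) ∂μD) < ⊤

/-- Spectral tail random fields. -/
structure IsSpectralTail (Q : Measure Ω) (S D : Set (Tl l)) (μT : Measure (Tl l))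
    (nrm : Ed d → ℝ) (α : ℝ) (Θ : Ω → Path l d) : Prop where
  isRF : IsRF Q S nrm Θ
  unitNorm : Q {ω | nrm (Θ ω 0) = 1} = 1
  ident : ∀ F : Path l d → ℝ≥0∞, MemFrakH S μT nrm 0 F → ∀ h ∈ S,
    ∫⁻ ω, mA nrm α (Θ ω h) * F (Θ ω) ∂Q
      = ∫⁻ ω in {ω | nrm (Θ ω (-h)) ≠ 0}, F (Bshift h (Θ ω)) ∂Q
  justen : Justen Q D Measure.count nrm α Θ

/-- Tail random fields. -/
structure IsTailRF (Q : Measure Ω) (S D : Set (Tl l)) (nrm : Ed d → ℝ) (α : ℝ)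
    (Y : Ω → Path l d) : Prop where
  isRF : IsRF Q S nrm Y
  gtOne : Q {ω | 1 < nrm (Y ω 0)} = 1
  ident : ∀ Γ : Path l d → ℝ≥0∞, Measurable Γ → ∀ h ∈ S, ∀ x : ℝ, 0 < x →
    ∫⁻ ω in {ω | 1 < x * nrm (Y ω (-h))}, Γ (x • Bshift h (Y ω)) ∂Q
      = ENNReal.ofReal (x ^ α) * ∫⁻ ω in {ω | x < nrm (Y ω h)}, Γ (Y ω) ∂Q
  justen : Justen Q D Measure.count nrm α Y

end Tail

/-- `S_V(f) = ∫_V ‖f(t)‖^α λ(dt)`. -/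
def SV (μ : Measure (Tl l)) (V : Set (Tl l)) (nrm : Ed d → ℝ) (α : ℝ) (f : Path l d) : ℝ≥0∞ :=
  ∫⁻ t in V, mA nrm α (f t) ∂μ

/-- `B_{V,τ}(f) = ∫_V ‖f(t)‖^τ 1{‖f(t)‖ ≥ 1} λ(dt)`. -/
def BV (μ : Measure (Tl l)) (V : Set (Tl l)) (nrm : Ed d → ℝ) (τ : ℝ) (f : Path l d) : ℝ≥0∞ :=
  ∫⁻ t in V, ENNReal.ofReal (if 1 ≤ nrm (f t) then nrm (f t) ^ τ else 0) ∂μ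

/-- `M_V(f) = sup_{t ∈ V} ‖f(t)‖`. -/
def MV (V : Set (Tl l)) (nrm : Ed d → ℝ) (f : Path l d) : ℝ≥0∞ :=
  ⨆ t ∈ V, ENNReal.ofReal (nrm (f t))

/-- `‖f(t)‖ → 0` as `Σ|t_i| → ∞` along `V`. -/
def VanishAtInfty (V : Set (Tl l)) (nrm : Ed d → ℝ) (f : Path l d) : Prop :=
  Tendsto (fun t => nrm (f t))
    ((Filter.comap (fun t : Tl l => ∑ i, |t i|) Filter.atTop) ⊓ Filter.principal V) (nhds 0)

/-- Full rank lattices on `ℝ^l`. -/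
def IsFullRankLattice (E : Set (Tl l)) : Prop :=
  ∃ A : Matrix (Fin l) (Fin l) ℝ, A.det ≠ 0 ∧
    E = {t | ∃ x : Fin l → ℤ, t = A.mulVec fun i => (x i : ℝ)}

/-- A lattice on `𝕋`: a discrete additive subgroup with countably infinitely many elements. -/
def IsLatticeOn (S E : Set (Tl l)) : Prop :=
  E ⊆ S ∧ (0 : Tl l) ∈ E ∧ (∀ x ∈ E, ∀ y ∈ E, x - y ∈ E) ∧ E.Countable ∧ E.Infinite ∧
    ∀ x ∈ E, ∃ ε : ℝ, 0 < ε ∧ ∀ y ∈ E, y ≠ x → ε ≤ ∑ i, |x i - y i|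

/-- An additive subgroup of `𝕋` with countably infinitely many elements. -/
def IsCountableSubgroup (S E : Set (Tl l)) : Prop :=
  E ⊆ S ∧ (0 : Tl l) ∈ E ∧ (∀ x ∈ E, ∀ y ∈ E, x - y ∈ E) ∧ E.Countable ∧ E.Infinite

/-- A shift-invariant total order on `𝕋`. -/
def ShiftInvOrder (r : Tl l → Tl l → Prop) : Prop :=
  IsLinearOrder (Tl l) r ∧ ∀ i j k : Tl l, r i j → r (i + k) (j + k)

/-- `j` is the infargsup of `‖f‖` on `V` with respect to the order `r`. -/
def IsInfArgSup (r : Tl l → Tl l → Prop) (V : Set (Tl l)) (nrm : Ed d → ℝ)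
    (f : Path l d) (j : Tl l) : Prop :=
  j ∈ V ∧ ENNReal.ofReal (nrm (f j)) = MV V nrm f ∧
    ∀ i ∈ V, ENNReal.ofReal (nrm (f i)) = MV V nrm f → r j i

/-- `j` is the first exceedance of level `1` of `‖f‖` on `V` with respect to the order `r`. -/
def IsFirstExceed (r : Tl l → Tl l → Prop) (V : Set (Tl l)) (nrm : Ed d → ℝ)
    (f : Path l d) (j : Tl l) : Prop :=
  j ∈ V ∧ 1 < nrm (f j) ∧ ∀ i ∈ V, 1 < nrm (f i) → r j i

/-- Property A1 of maps `J : 𝔻 → ℝ̄^l` : `J(B^j f) = J(f) + j` for `j ∈ E`. -/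
def A1prop (E : Set (Tl l)) (J : Path l d → (Fin l → EReal)) : Prop :=
  ∀ j ∈ E, ∀ f : Path l d, ∀ i, J (Bshift j f) i = J f i + (j i : EReal)

/-- `0`-homogeneity of `J`. -/
def ZeroHomJ (J : Path l d → (Fin l → EReal)) : Prop :=
  ∀ c : ℝ, 0 < c → ∀ f : Path l d, J (c • f) = J f

/-- `J(f) = j ∈ E`. -/
def JinAt (E : Set (Tl l)) (J : Path l d → (Fin l → EReal)) (f : Path l d) (j : Tl l) : Prop :=
  j ∈ E ∧ ∀ i, J f i = ((j i : ℝ) : EReal)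

/-- `J(f) ∈ E`. -/
def Jin (E : Set (Tl l)) (J : Path l d → (Fin l → EReal)) (f : Path l d) : Prop :=
  ∃ j, JinAt E J f j

/-- Property A2: `J(f) = j ∈ E` implies `‖f(j)‖ > 0`. -/
def A2prop (E : Set (Tl l)) (nrm : Ed d → ℝ) (J : Path l d → (Fin l → EReal)) : Prop :=
  ∀ f : Path l d, ∀ j, JinAt E J f j → 0 < nrm (f j)

/-- Property A3: `J(f) = j ∈ E` implies `‖f(j)‖ > min(1, ‖f(0)‖)`. -/
def A3prop (E : Set (Tl l)) (nrm : Ed d → ℝ) (J : Path l d → (Fin l → EReal)) : Prop :=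
  ∀ f : Path l d, ∀ j, JinAt E J f j → min 1 (nrm (f 0)) < nrm (f j)

/-- The extremal index of `Z` with respect to `L`:
`θ = lim n^{-l} E[max_{t ∈ [0,n]^l ∩ L} ‖Z(t)‖^α]`. -/
def ExtIndex {Ω : Type*} [MeasurableSpace Ω] (P : Measure Ω) (L : Set (Tl l))
    (nrm : Ed d → ℝ) (α : ℝ) (Z : Ω → Path l d) (θ : ℝ≥0∞) : Prop :=
  Tendsto (fun n : ℕ =>
      (∫⁻ ω, ⨆ t ∈ L ∩ {t : Tl l | ∀ i, 0 ≤ t i ∧ t i ≤ (n : ℝ)}, mA nrm α (Z ω t) ∂P)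
        / (n : ℝ≥0∞) ^ l)
    atTop (nhds θ)

end SIRF

/-!
Everything is governed by the moment `A(s, u) = E[‖Z(s)‖^α ; ‖Z(u)‖ = 0]` (`momentOnZero`).
The identity defining `K_α[Z]`, applied to the `0`-homogeneous functional `1{‖f(u)‖ = 0}`,
shows that `A` is the same for every member of the class, so shift-invariance of the class gives
`A(s - h, u - h) = A(s, u)`. For any member `Z̃`, `P(‖Z̃(u)‖ = 0) = 0` iff `A(·, u)` vanishes on
`𝕋`: on `{‖Z̃(u)‖ = 0}` the field then vanishes a.s. on a countable separant, hence everywhere,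
which `sup ‖Z̃‖ > 0` forbids. Hence (i) and both forms of (ii) say `A ≡ 0`. Finally
`P̂(‖Θ(t)‖ = 0) = A(0, t)`, which gives (iii), and the identity for `Θ` with `F = 1` reads
`E[‖Z(s)‖^α ; ‖Z(0)‖ > 0] = E[‖Z(s)‖^α]`, i.e. `A(s, 0) = 0`, which gives (iv).
-/

namespace MeasureTheory

variable {Ω ι : Type*} [MeasurableSpace Ω] {P : Measure Ω} {L : Filter ι} {f : ι → Ω → ℝ}
  {g : Ω → ℝ}

lemma TendstoInMeasure.mul_left [IsFiniteMeasure P] {c : Ω → ℝ} (hc : Measurable c)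
    (hfg : TendstoInMeasure P f L g) :
    TendstoInMeasure P (fun i ω => c ω * f i ω) L fun ω => c ω * g ω := by
  rw [tendstoInMeasure_iff_dist] at hfg ⊢
  intro ε hε
  rw [ENNReal.tendsto_nhds_zero]
  intro δ hδ
  have htail : Tendsto (fun M : ℝ => P {ω | M < |c ω|}) atTop (nhds 0) := by
    have hempty : ⋂ M : ℝ, {ω | M < |c ω|} = ∅ :=
      eq_empty_of_forall_notMem fun ω hω =>
        lt_irrefl _ (show |c ω| < |c ω| from mem_iInter.mp hω _)
    simpa [hempty, Function.comp_def] using tendsto_measure_iInter_atTop (μ := P)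
      (fun M => (measurableSet_lt measurable_const hc.abs).nullMeasurableSet)
      (fun M N hMN ω (hω : N < |c ω|) => hMN.trans_lt hω) ⟨0, measure_ne_top _ _⟩
  obtain ⟨M, hM, hM0⟩ := ((ENNReal.tendsto_nhds_zero.mp htail (δ / 2)
    (ENNReal.half_pos hδ.ne')).and (eventually_gt_atTop 0)).exists
  filter_upwards [ENNReal.tendsto_nhds_zero.mp (hfg (ε / M) (div_pos hε hM0)) (δ / 2)
    (ENNReal.half_pos hδ.ne')] with i hi
  have hsub : {ω | ε ≤ dist (c ω * f i ω) (c ω * g ω)} ⊆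
      {ω | M < |c ω|} ∪ {ω | ε / M ≤ dist (f i ω) (g ω)} := by
    intro ω (hω : ε ≤ dist (c ω * f i ω) (c ω * g ω))
    rcases lt_or_ge M |c ω| with hcM | hcM
    · exact Or.inl hcM
    · refine Or.inr ((div_le_iff₀ hM0).mpr ?_)
      calc ε ≤ |c ω| * dist (f i ω) (g ω) := by
            simpa only [← smul_eq_mul, dist_smul₀, Real.norm_eq_abs] using hω
        _ ≤ dist (f i ω) (g ω) * M := by rw [mul_comm]; gcongr
  calc P {ω | ε ≤ dist (c ω * f i ω) (c ω * g ω)}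
      ≤ P {ω | M < |c ω|} + P {ω | ε / M ≤ dist (f i ω) (g ω)} :=
        (measure_mono hsub).trans (measure_union_le _ _)
    _ ≤ δ / 2 + δ / 2 := add_le_add hM hi
    _ = δ := ENNReal.add_halves δ

lemma TendstoInMeasure.withDensity {ρ : Ω → ℝ≥0∞} (hfin : ∫⁻ ω, ρ ω ∂P ≠ ⊤)
    (hfg : TendstoInMeasure P f L g) : TendstoInMeasure (P.withDensity ρ) f L g := by
  intro ε hε
  rw [ENNReal.tendsto_nhds_zero]
  intro δ hδ
  obtain ⟨η, hη, hηδ⟩ := exists_pos_setLIntegral_lt_of_measure_lt hfin hδ.ne'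
  filter_upwards [(hfg ε hε).eventually_lt_const hη] with i hi
  set A := {ω | ε ≤ edist (f i ω) (g ω)}
  calc P.withDensity ρ A ≤ P.withDensity ρ (toMeasurable P A) :=
        measure_mono (subset_toMeasurable P A)
    _ = ∫⁻ ω in toMeasurable P A, ρ ω ∂P := withDensity_apply ρ (measurableSet_toMeasurable P A)
    _ ≤ δ := (hηδ _ (by rwa [measure_toMeasurable])).le

end MeasureTheory

namespace SIRF

section Basic

variable {l d : ℕ}

lemma countable_latticeZ (l : ℕ) : (latticeZ l).Countable :=
  (Set.countable_range fun x : Fin l → ℤ => fun i => (x i : ℝ)).mono fun t ht => by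
    choose n hn using ht
    exact ⟨n, funext fun i => (hn i).symm⟩

namespace Setting

variable {S : Set (Tl l)} {μT : Measure (Tl l)} {D : Set (Tl l)}

lemma zero_mem (hset : Setting S μT D) : (0 : Tl l) ∈ S := by
  rcases hset with ⟨rfl, -, -⟩ | ⟨rfl, -, -⟩
  · trivial
  · exact fun i => ⟨0, by simp⟩

lemma sub_mem (hset : Setting S μT D) {s h : Tl l} (hs : s ∈ S) (hh : h ∈ S) : s - h ∈ S := by
  rcases hset with ⟨rfl, -, -⟩ | ⟨rfl, -, -⟩
  · trivial
  · intro i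
    obtain ⟨n, hn⟩ := hs i
    obtain ⟨m, hm⟩ := hh i
    exact ⟨n - m, by simp [hn, hm]⟩

end Setting

variable {nrm : Ed d → ℝ} {α : ℝ}

lemma HomNorm.map_inv_smul (hnrm : HomNorm nrm) (x y : Ed d) :
    nrm ((nrm x)⁻¹ • y) = (nrm x)⁻¹ * nrm y :=
  hnrm.2.2 _ (inv_nonneg.mpr (hnrm.2.1 x)) y

lemma mA_eq_zero_iff (hnrm : HomNorm nrm) (hα : 0 < α) (x : Ed d) :
    mA nrm α x = 0 ↔ nrm x = 0 := by
  have hx := hnrm.2.1 x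
  rw [mA, ENNReal.ofReal_eq_zero, (Real.rpow_nonneg hx α).ge_iff_eq', Real.rpow_eq_zero hx hα.ne']

lemma mA_mul_mA_inv_smul (hnrm : HomNorm nrm) {x : Ed d} (hx : nrm x ≠ 0) (y : Ed d) :
    mA nrm α x * mA nrm α ((nrm x)⁻¹ • y) = mA nrm α y := by
  have hx0 := hnrm.2.1 x
  rw [mA, mA, mA, hnrm.map_inv_smul, ← ENNReal.ofReal_mul (Real.rpow_nonneg hx0 α),
    ← Real.mul_rpow hx0 (mul_nonneg (inv_nonneg.mpr hx0) (hnrm.2.1 y)), mul_inv_cancel_left₀ hx]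

lemma mA_mul_mA_inv_smul_le (hnrm : HomNorm nrm) (hα : 0 < α) (x y : Ed d) :
    mA nrm α x * mA nrm α ((nrm x)⁻¹ • y) ≤ mA nrm α y := by
  by_cases hx : nrm x = 0
  · simp [(mA_eq_zero_iff hnrm hα x).mpr hx]
  · exact (mA_mul_mA_inv_smul hnrm hx y).le

namespace IsRF

variable {Ω : Type*} [MeasurableSpace Ω] {Q : Measure Ω} {S : Set (Tl l)} {V : Ω → Path l d}

lemma measurable_nrm (hV : IsRF Q S nrm V) (t : Tl l) : Measurable fun ω => nrm (V ω t) :=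
  hV.jointMeas.comp (measurable_id.prodMk measurable_const)

lemma measurable_mA (hV : IsRF Q S nrm V) (hα : 0 < α) (t : Tl l) :
    Measurable fun ω => mA nrm α (V ω t) :=
  ENNReal.measurable_ofReal.comp
    ((Real.continuous_rpow_const hα.le).measurable.comp (hV.measurable_nrm t))

lemma measurableSet_nrm_eq_zero (hV : IsRF Q S nrm V) (t : Tl l) :
    MeasurableSet {ω | nrm (V ω t) = 0} :=
  hV.measurable_nrm t (measurableSet_singleton 0)

lemma measurable_mA_mul_ite (hV : IsRF Q S nrm V) (hα : 0 < α) (s u : Tl l) :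
    Measurable fun ω => mA nrm α (V ω s) * (if nrm (V ω u) = 0 then (1 : ℝ≥0∞) else 0) :=
  (hV.measurable_mA hα s).mul
    (Measurable.ite (hV.measurableSet_nrm_eq_zero u) measurable_const measurable_const)

lemma measure_pos_eq_one_iff [IsProbabilityMeasure Q] (hnrm : HomNorm nrm)
    (hV : IsRF Q S nrm V) (t : Tl l) :
    Q {ω | 0 < nrm (V ω t)} = 1 ↔ Q {ω | nrm (V ω t) = 0} = 0 := by
  have hcompl : {ω | 0 < nrm (V ω t)} = {ω | nrm (V ω t) = 0}ᶜ := by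
    ext ω
    simp [(hnrm.2.1 (V ω t)).lt_iff_ne, eq_comm]
  rw [hcompl, prob_compl_eq_one_iff (hV.measurableSet_nrm_eq_zero t)]

end IsRF

end Basic

section MomentOnZero

variable {l d : ℕ} {nrm : Ed d → ℝ} {α : ℝ}

def momentOnZero (nrm : Ed d → ℝ) (α : ℝ) {Ω : Type*} [MeasurableSpace Ω] (Q : Measure Ω)
    (V : Ω → Path l d) (s u : Tl l) : ℝ≥0∞ :=
  ∫⁻ ω, mA nrm α (V ω s) * (if nrm (V ω u) = 0 then 1 else 0) ∂Q

lemma mA_mul_ite_inv_smul (hnrm : HomNorm nrm) (hα : 0 < α) (f : Path l d) (s u : Tl l) :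
    mA nrm α (f s) * (if nrm ((nrm (f s))⁻¹ • f u) = 0 then (1 : ℝ≥0∞) else 0)
      = mA nrm α (f s) * (if nrm (f u) = 0 then 1 else 0) := by
  by_cases hs : nrm (f s) = 0
  · simp [(mA_eq_zero_iff hnrm hα _).mpr hs]
  · simp [hnrm.map_inv_smul, hs]

variable {Ω Ω' : Type*} [MeasurableSpace Ω] [MeasurableSpace Ω'] {P Q : Measure Ω}
  {P' : Measure Ω'} {S : Set (Tl l)} {Z V : Ω → Path l d} {Z' : Ω' → Path l d}

lemma FunIdent.momentOnZero_eq (hfi : FunIdent P P' S nrm α Z Z') (hnrm : HomNorm nrm)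
    (hα : 0 < α) {s : Tl l} (hs : s ∈ S) (u : Tl l) :
    momentOnZero nrm α P' Z' s u = momentOnZero nrm α P Z s u := by
  have hF : Measurable fun f : Path l d => if nrm (f u) = 0 then (1 : ℝ≥0∞) else 0 :=
    Measurable.ite ((hnrm.1.comp (measurable_pi_apply u)) (measurableSet_singleton 0))
      measurable_const measurable_const
  have hident := hfi s hs _ hF
  simp only [mA_mul_ite_inv_smul hnrm hα] at hident
  exact hident

lemma ShiftInvariantK.momentOnZero_sub_sub {μT : Measure (Tl l)} {D : Set (Tl l)}
    (hshift : ShiftInvariantK P S nrm α Z) (hset : Setting S μT D) (hnrm : HomNorm nrm)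
    (hα : 0 < α) {s h : Tl l} (hs : s ∈ S) (hh : h ∈ S) (u : Tl l) :
    momentOnZero nrm α P Z (s - h) (u - h) = momentOnZero nrm α P Z s u := by
  obtain ⟨Ω', _, P', -, -, Z', hmem, hshifted⟩ := hshift
  calc momentOnZero nrm α P Z (s - h) (u - h)
      = momentOnZero nrm α P' Z' (s - h) (u - h) :=
        (hmem.2.2.2.momentOnZero_eq hnrm hα (hset.sub_mem hs hh) _).symm
    _ = momentOnZero nrm α P' (fun ω => Bshift h (Z' ω)) s u := rfl
    _ = momentOnZero nrm α P Z s u := (hshifted h hh).2.2.2.momentOnZero_eq hnrm hα hs u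

lemma ShiftInvariantK.forall_momentOnZero_eq_zero_iff_right {μT : Measure (Tl l)}
    {D : Set (Tl l)} (hshift : ShiftInvariantK P S nrm α Z) (hset : Setting S μT D)
    (hnrm : HomNorm nrm) (hα : 0 < α) :
    (∀ u ∈ S, ∀ s ∈ S, momentOnZero nrm α P Z s u = 0) ↔
      ∀ s ∈ S, momentOnZero nrm α P Z s 0 = 0 := by
  refine ⟨fun h s hs => h 0 hset.zero_mem s hs, fun h u hu s hs => ?_⟩
  rw [← hshift.momentOnZero_sub_sub hset hnrm hα hs hu, sub_self]
  exact h _ (hset.sub_mem hs hu)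

lemma ShiftInvariantK.forall_momentOnZero_eq_zero_iff_left {μT : Measure (Tl l)}
    {D : Set (Tl l)} (hshift : ShiftInvariantK P S nrm α Z) (hset : Setting S μT D)
    (hnrm : HomNorm nrm) (hα : 0 < α) :
    (∀ u ∈ S, ∀ s ∈ S, momentOnZero nrm α P Z s u = 0) ↔
      ∀ u ∈ S, momentOnZero nrm α P Z 0 u = 0 := by
  refine ⟨fun h u hu => h u hu 0 hset.zero_mem, fun h u hu s hs => ?_⟩
  rw [← hshift.momentOnZero_sub_sub hset hnrm hα hs hs, sub_self]
  exact h _ (hset.sub_mem hu hs)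

lemma momentOnZero_eq_zero_of_measure_eq_zero {u : Tl l}
    (hnull : Q {ω | nrm (V ω u) = 0} = 0) (s : Tl l) : momentOnZero nrm α Q V s u = 0 := by
  refine lintegral_eq_zero_of_ae_eq_zero ?_
  filter_upwards [measure_eq_zero_iff_ae_notMem.mp hnull] with ω hω
  simp [show nrm (V ω u) ≠ 0 from hω]

lemma IsRF.exists_countable_ae_exists_ne_zero [IsProbabilityMeasure Q] {μT : Measure (Tl l)}
    {D : Set (Tl l)} (hV : IsRF Q S nrm V) (hset : Setting S μT D) (hps : PosSup Q S nrm V) :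
    ∃ C ⊆ S, C.Countable ∧ ∀ᵐ ω ∂Q, ∃ s ∈ C, nrm (V ω s) ≠ 0 := by
  obtain ⟨C, hCS, hC, hsep⟩ : ∃ C ⊆ S, C.Countable ∧
      ∀ᵐ ω ∂Q, (∃ t ∈ S, 0 < nrm (V ω t)) → ∃ s ∈ C, nrm (V ω s) ≠ 0 := by
    rcases hset with ⟨hS, -, -⟩ | ⟨hS, -, -⟩
    · obtain ⟨C, hC, -, hsep⟩ := hV.separable hS
      refine ⟨C, hS ▸ subset_univ C, hC, ?_⟩
      filter_upwards [hsep univ isOpen_univ] with ω hω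
      rintro ⟨t, -, ht⟩
      by_contra! hzero
      have hsup : (⨆ s ∈ univ, ENNReal.ofReal (nrm (V ω s))) = 0 := by
        rw [← hω]
        simp +contextual [hzero]
      exact ht.not_ge (by simpa using ENNReal.iSup_eq_zero.mp hsup t)
    · exact ⟨S, subset_rfl, hS ▸ countable_latticeZ l,
        ae_of_all _ fun ω ⟨t, ht, hpos⟩ => ⟨t, ht, hpos.ne'⟩⟩
  refine ⟨C, hCS, hC, ?_⟩
  have hmeas : MeasurableSet {ω | ∃ s ∈ C, nrm (V ω s) ≠ 0} := by
    convert MeasurableSet.biUnion hC fun s _ => (hV.measurableSet_nrm_eq_zero s).compl using 1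
    ext
    simp
  rw [ae_iff_measure_eq hmeas.nullMeasurableSet, measure_univ]
  exact le_antisymm prob_le_one (hps ▸ measure_mono_ae hsep)

lemma IsRF.measure_pos_eq_one_iff_momentOnZero [IsProbabilityMeasure Q] {μT : Measure (Tl l)}
    {D : Set (Tl l)} (hV : IsRF Q S nrm V) (hset : Setting S μT D) (hnrm : HomNorm nrm)
    (hα : 0 < α) (hps : PosSup Q S nrm V) (u : Tl l) :
    Q {ω | 0 < nrm (V ω u)} = 1 ↔ ∀ s ∈ S, momentOnZero nrm α Q V s u = 0 := by
  rw [hV.measure_pos_eq_one_iff hnrm u]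
  refine ⟨fun hnull s _ => momentOnZero_eq_zero_of_measure_eq_zero hnull s, fun h => ?_⟩
  obtain ⟨C, hCS, hC, hne⟩ := hV.exists_countable_ae_exists_ne_zero hset hps
  have hvanish : ∀ᵐ ω ∂Q, ∀ s ∈ C, nrm (V ω u) = 0 → nrm (V ω s) = 0 := by
    refine (ae_ball_iff hC).mpr fun s hs => ?_
    filter_upwards [(lintegral_eq_zero_iff (hV.measurable_mA_mul_ite hα s u)).mp (h s (hCS hs))]
      with ω hω hu
    simpa [hu, mA_eq_zero_iff hnrm hα] using hω
  rw [measure_eq_zero_iff_ae_notMem]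
  filter_upwards [hne, hvanish] with ω ⟨s, hs, hns⟩ hω hu
  exact hns (hω s hs hu)

end MomentOnZero

lemma MemK.forall_measure_pos_eq_one_iff {l d : ℕ} {nrm : Ed d → ℝ} {α : ℝ}
    {Ω Ω' : Type*} [MeasurableSpace Ω] [MeasurableSpace Ω'] {P : Measure Ω}
    {P' : Measure Ω'} [IsProbabilityMeasure P'] {S : Set (Tl l)} {μT : Measure (Tl l)}
    {D : Set (Tl l)} {Z : Ω → Path l d} {Z' : Ω' → Path l d} (hmem : MemK P P' S nrm α Z Z')
    (hset : Setting S μT D) (hnrm : HomNorm nrm) (hα : 0 < α) :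
    (∀ t ∈ S, P' {ω | 0 < nrm (Z' ω t)} = 1) ↔
      ∀ t ∈ S, ∀ s ∈ S, momentOnZero nrm α P Z s t = 0 := by
  refine forall₂_congr fun t _ => ?_
  rw [hmem.1.measure_pos_eq_one_iff_momentOnZero hset hnrm hα hmem.2.2.1 t]
  exact forall₂_congr fun s hs => by rw [hmem.2.2.2.momentOnZero_eq hnrm hα hs t]

section Theta

variable {l d : ℕ} {nrm : Ed d → ℝ} {α : ℝ}

lemma HomNorm.nrm_theta {Ω : Type*} (hnrm : HomNorm nrm) (Z : Ω → Path l d) (ω : Ω) (t : Tl l) :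
    nrm (Theta nrm Z ω t) = (nrm (Z ω 0))⁻¹ * nrm (Z ω t) :=
  hnrm.map_inv_smul _ _

variable {Ω : Type*} [MeasurableSpace Ω] {P : Measure Ω} {S : Set (Tl l)} {Z : Ω → Path l d}

lemma IsRF.measurable_nrm_theta (hZ : IsRF P S nrm Z) (hnrm : HomNorm nrm) (t : Tl l) :
    Measurable fun ω => nrm (Theta nrm Z ω t) := by
  simp only [hnrm.nrm_theta]
  exact (hZ.measurable_nrm 0).inv.mul (hZ.measurable_nrm t)

lemma IsRF.lintegral_phat (hZ : IsRF P S nrm Z) (hα : 0 < α) (g : Ω → ℝ≥0∞) :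
    ∫⁻ ω, g ω ∂Phat P nrm α Z = ∫⁻ ω, mA nrm α (Z ω 0) * g ω ∂P :=
  lintegral_withDensity_eq_lintegral_mul_non_measurable P (hZ.measurable_mA hα 0)
    (ae_of_all _ fun _ => ENNReal.ofReal_lt_top) g

lemma isProbabilityMeasure_phat (h01 : ∫⁻ ω, mA nrm α (Z ω 0) ∂P = 1) :
    IsProbabilityMeasure (Phat P nrm α Z) :=
  ⟨by rw [Phat, withDensity_apply _ MeasurableSet.univ, setLIntegral_univ, h01]⟩

lemma IsRF.phat_measure_theta_pos_eq_one_iff (hZ : IsRF P S nrm Z) (hnrm : HomNorm nrm)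
    (hα : 0 < α) (h01 : ∫⁻ ω, mA nrm α (Z ω 0) ∂P = 1) (t : Tl l) :
    Phat P nrm α Z {ω | 0 < nrm (Theta nrm Z ω t)} = 1 ↔ momentOnZero nrm α P Z 0 t = 0 := by
  have hA : MeasurableSet {ω | 0 < nrm (Theta nrm Z ω t)} :=
    measurableSet_lt measurable_const (hZ.measurable_nrm_theta hnrm t)
  have hsum : Phat P nrm α Z {ω | 0 < nrm (Theta nrm Z ω t)} + momentOnZero nrm α P Z 0 t = 1 := by
    rw [Phat, withDensity_apply _ hA, ← lintegral_indicator hA, momentOnZero,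
      ← lintegral_add_right _ (hZ.measurable_mA_mul_ite hα 0 t)]
    refine (lintegral_congr fun ω => ?_).trans h01
    by_cases h0 : nrm (Z ω 0) = 0
    · simp [(mA_eq_zero_iff hnrm hα _).mpr h0]
    · have hpos : 0 < nrm (Z ω 0) := (hnrm.2.1 _).lt_of_ne' h0
      by_cases ht : nrm (Z ω t) = 0
      · simp [indicator, hnrm.nrm_theta, ht]
      · simp [indicator, hnrm.nrm_theta, ht, hpos, (hnrm.2.1 (Z ω t)).lt_of_ne' ht]
  constructor
  · intro h
    rw [h] at hsum
    exact (ENNReal.add_right_inj ENNReal.one_ne_top).mp (hsum.trans (add_zero 1).symm)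
  · intro h
    rwa [h, add_zero] at hsum

lemma CondC1.lintegral_mA_lt_top (hC1 : CondC1 P S nrm α Z) {h : Tl l} (hh : h ∈ S) :
    ∫⁻ ω, mA nrm α (Z ω h) ∂P < ⊤ := by
  refine (lintegral_mono fun ω => ?_).trans_lt (hC1 (‖h‖ + 1) (by positivity))
  exact le_iSup₂ (f := fun t (_ : t ∈ S ∩ box _) => mA nrm α (Z ω t)) h
    ⟨hh, fun i => (norm_le_pi_norm h i).trans (le_add_of_nonneg_right zero_le_one)⟩

lemma IsRF.momentOnZero_eq_zero_of_funIdent_theta (hZ : IsRF P S nrm Z) (hnrm : HomNorm nrm)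
    (hα : 0 < α) (hC1 : CondC1 P S nrm α Z)
    (hfi : FunIdent P (Phat P nrm α Z) S nrm α Z (Theta nrm Z)) {s : Tl l} (hs : s ∈ S) :
    momentOnZero nrm α P Z s 0 = 0 := by
  have hident := hfi s hs (fun _ => 1) measurable_const
  simp only [mul_one, hZ.lintegral_phat hα] at hident
  have hsplit : ∫⁻ ω, mA nrm α (Z ω 0) * mA nrm α (Theta nrm Z ω s) ∂P
      + momentOnZero nrm α P Z s 0 = ∫⁻ ω, mA nrm α (Z ω s) ∂P := by
    rw [momentOnZero, ← lintegral_add_right _ (hZ.measurable_mA_mul_ite hα s 0)]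
    refine lintegral_congr fun ω => ?_
    by_cases h0 : nrm (Z ω 0) = 0
    · simp [(mA_eq_zero_iff hnrm hα _).mpr h0, h0]
    · simp [Theta, mA_mul_mA_inv_smul hnrm h0, h0]
  rw [hident] at hsplit
  exact (ENNReal.add_right_inj (hC1.lintegral_mA_lt_top hs).ne).mp
    (hsplit.trans (add_zero _).symm)

lemma IsRF.theta [IsFiniteMeasure P] (hZ : IsRF P S nrm Z) (hnrm : HomNorm nrm)
    (h01 : ∫⁻ ω, mA nrm α (Z ω 0) ∂P = 1) : IsRF (Phat P nrm α Z) S nrm (Theta nrm Z) where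
  jointMeas := by
    simp only [hnrm.nrm_theta]
    exact ((hZ.measurable_nrm 0).comp measurable_fst).inv.mul hZ.jointMeas
  separable hS := by
    obtain ⟨C, hC, hdense, hsep⟩ := hZ.separable hS
    refine ⟨C, hC, hdense, fun U hU => ?_⟩
    filter_upwards [withDensity_absolutelyContinuous P _ |>.ae_le (hsep U hU)] with ω hω
    simp only [hnrm.nrm_theta, ENNReal.ofReal_mul (inv_nonneg.mpr (hnrm.2.1 _)),
      ← ENNReal.mul_iSup, hω]
  qsc hS t ε := by
    obtain ⟨g, hg, hgt⟩ := hZ.qsc hS t ε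
    refine ⟨fun ω => (nrm (Z ω 0))⁻¹ * g ω, ?_, fun hε => ?_⟩
    · simp only [hnrm.nrm_theta]
      exact TendstoInMeasure.withDensity (by simp [h01])
        (TendstoInMeasure.mul_left (hZ.measurable_nrm 0).inv hg)
    · simp [hgt hε, hnrm.nrm_theta]

lemma IsRF.condC1_theta (hZ : IsRF P S nrm Z) (hnrm : HomNorm nrm) (hα : 0 < α)
    (hC1 : CondC1 P S nrm α Z) : CondC1 (Phat P nrm α Z) S nrm α (Theta nrm Z) := by
  intro a ha
  rw [hZ.lintegral_phat hα]
  refine (lintegral_mono fun ω => ?_).trans_lt (hC1 a ha)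
  simp only [ENNReal.mul_iSup]
  exact iSup₂_mono fun t _ => mA_mul_mA_inv_smul_le hnrm hα _ _

lemma IsRF.posSup_theta (hZ : IsRF P S nrm Z) (hnrm : HomNorm nrm) (hα : 0 < α)
    (h01 : ∫⁻ ω, mA nrm α (Z ω 0) ∂P = 1) (h0S : (0 : Tl l) ∈ S) :
    PosSup (Phat P nrm α Z) S nrm (Theta nrm Z) := by
  have := isProbabilityMeasure_phat h01
  have hae : ∀ᵐ ω ∂Phat P nrm α Z, ∃ t ∈ S, 0 < nrm (Theta nrm Z ω t) := by
    refine (ae_withDensity_iff (hZ.measurable_mA hα 0)).mpr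
      (ae_of_all _ fun ω hω => ⟨0, h0S, ?_⟩)
    rw [hnrm.nrm_theta, inv_mul_cancel₀ (mt (mA_eq_zero_iff hnrm hα _).mpr hω)]
    exact one_pos
  exact le_antisymm prob_le_one
    (measure_univ (μ := Phat P nrm α Z) ▸ measure_mono_ae (hae.mono fun ω h _ => h))

lemma IsRF.funIdent_theta (hZ : IsRF P S nrm Z) (hnrm : HomNorm nrm) (hα : 0 < α)
    (hnull : P {ω | nrm (Z ω 0) = 0} = 0) :
    FunIdent P (Phat P nrm α Z) S nrm α Z (Theta nrm Z) := by
  intro h _ F _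
  rw [hZ.lintegral_phat hα]
  refine lintegral_congr_ae ?_
  filter_upwards [measure_eq_zero_iff_ae_notMem.mp hnull] with ω (h0 : nrm (Z ω 0) ≠ 0)
  have hrescale : (fun t => (nrm (Theta nrm Z ω h))⁻¹ • Theta nrm Z ω t) =
      fun t => (nrm (Z ω h))⁻¹ • Z ω t := by
    funext t
    simp only [Theta]
    rw [smul_smul, hnrm.map_inv_smul, mul_inv, inv_inv, mul_right_comm, mul_inv_cancel₀ h0,
      one_mul]
  rw [hrescale, ← mul_assoc]
  exact congrArg (· * _) (mA_mul_mA_inv_smul hnrm h0 _)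

lemma IsRF.memK_theta [IsFiniteMeasure P] (hZ : IsRF P S nrm Z) (hnrm : HomNorm nrm)
    (hα : 0 < α) (hC1 : CondC1 P S nrm α Z) (h01 : ∫⁻ ω, mA nrm α (Z ω 0) ∂P = 1)
    (h0S : (0 : Tl l) ∈ S) (hnull : P {ω | nrm (Z ω 0) = 0} = 0) :
    MemK P (Phat P nrm α Z) S nrm α Z (Theta nrm Z) :=
  ⟨hZ.theta hnrm h01, hZ.condC1_theta hnrm hα hC1, hZ.posSup_theta hnrm hα h01 h0S,
    hZ.funIdent_theta hnrm hα hnull⟩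

end Theta

section Class

variable {l d : ℕ} {nrm : Ed d → ℝ} {α : ℝ} {Ω : Type*} [MeasurableSpace Ω] {P : Measure Ω}
  {S : Set (Tl l)} {μT : Measure (Tl l)} {D : Set (Tl l)} {Z : Ω → Path l d}

lemma ShiftInvariantK.exists_memK_pos_iff (hshift : ShiftInvariantK P S nrm α Z)
    (hset : Setting S μT D) (hnrm : HomNorm nrm) (hα : 0 < α) :
    (∃ (Ω' : Type) (_ : MeasurableSpace Ω') (P' : Measure Ω'),
        IsProbabilityMeasure P' ∧ P'.IsComplete ∧
          ∃ Z' : Ω' → Path l d, MemK P P' S nrm α Z Z' ∧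
            ∀ t ∈ S, P' {ω | 0 < nrm (Z' ω t)} = 1) ↔
      ∀ t ∈ S, ∀ s ∈ S, momentOnZero nrm α P Z s t = 0 := by
  constructor
  · rintro ⟨Ω', _, P', _, -, Z', hmem, hpos⟩
    exact (hmem.forall_measure_pos_eq_one_iff hset hnrm hα).mp hpos
  · obtain ⟨Ω', _, P', _, hcomplete, Z', hmem, -⟩ := hshift
    exact fun h => ⟨Ω', _, P', inferInstance, hcomplete, Z', hmem,
      (hmem.forall_measure_pos_eq_one_iff hset hnrm hα).mpr h⟩

lemma ShiftInvariantK.forall_memK_pos_iff (hshift : ShiftInvariantK P S nrm α Z)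
    (hset : Setting S μT D) (hnrm : HomNorm nrm) (hα : 0 < α) :
    (∀ (Ω' : Type) (_ : MeasurableSpace Ω') (P' : Measure Ω'),
        IsProbabilityMeasure P' → P'.IsComplete →
        ∀ Z' : Ω' → Path l d, MemK P P' S nrm α Z Z' →
          ∀ t ∈ S, P' {ω | 0 < nrm (Z' ω t)} = 1) ↔
      ∀ t ∈ S, ∀ s ∈ S, momentOnZero nrm α P Z s t = 0 := by
  constructor
  · obtain ⟨Ω', _, P', _, hcomplete, Z', hmem, -⟩ := hshift
    exact fun h => (hmem.forall_measure_pos_eq_one_iff hset hnrm hα).mp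
      (h Ω' _ P' inferInstance hcomplete Z' hmem)
  · intro h Ω' _ P' _ _ Z' hmem
    exact (hmem.forall_measure_pos_eq_one_iff hset hnrm hα).mpr h

end Class

theorem statement17_general {l d : ℕ}
    (S : Set (Tl l)) (μT : Measure (Tl l)) (D : Set (Tl l)) (hset : Setting S μT D)
    (nrm : Ed d → ℝ) (hnrm : HomNorm nrm) (α : ℝ) (hα : 0 < α)
    (Ω : Type) [MeasurableSpace Ω] (P : Measure Ω) [IsProbabilityMeasure P]
    (Z : Ω → Path l d) (hZ : IsRF P S nrm Z)
    (hC1 : CondC1 P S nrm α Z) (hpos : PosSup P S nrm Z)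
    (h01 : (∫⁻ ω, mA nrm α (Z ω 0) ∂P) = 1)
    (hshift : ShiftInvariantK P S nrm α Z) :
    -- (i) ↔ (ii) (some version)
    (P {ω | 0 < nrm (Z ω 0)} = 1 ↔
      ∃ (Ω' : Type) (_ : MeasurableSpace Ω') (P' : Measure Ω'),
        IsProbabilityMeasure P' ∧ P'.IsComplete ∧
          ∃ Z' : Ω' → Path l d, MemK P P' S nrm α Z Z' ∧
            ∀ t ∈ S, P' {ω | 0 < nrm (Z' ω t)} = 1) ∧
    -- (ii): some version ↔ all version
    ((∃ (Ω' : Type) (_ : MeasurableSpace Ω') (P' : Measure Ω'),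
        IsProbabilityMeasure P' ∧ P'.IsComplete ∧
          ∃ Z' : Ω' → Path l d, MemK P P' S nrm α Z Z' ∧
            ∀ t ∈ S, P' {ω | 0 < nrm (Z' ω t)} = 1) ↔
      (∀ (Ω' : Type) (_ : MeasurableSpace Ω') (P' : Measure Ω'),
        IsProbabilityMeasure P' → P'.IsComplete →
        ∀ Z' : Ω' → Path l d, MemK P P' S nrm α Z Z' →
          ∀ t ∈ S, P' {ω | 0 < nrm (Z' ω t)} = 1)) ∧
    -- (i) ↔ (iii)
    (P {ω | 0 < nrm (Z ω 0)} = 1 ↔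
      ∀ t ∈ S, (Phat P nrm α Z) {ω | 0 < nrm (Theta nrm Z ω t)} = 1) ∧
    -- (i) ↔ (iv)
    (P {ω | 0 < nrm (Z ω 0)} = 1 ↔
      MemK P (Phat P nrm α Z) S nrm α Z (Theta nrm Z)) := by
  have hmoment := hZ.measure_pos_eq_one_iff_momentOnZero hset hnrm hα hpos 0
  have hi : P {ω | 0 < nrm (Z ω 0)} = 1 ↔ ∀ t ∈ S, ∀ s ∈ S, momentOnZero nrm α P Z s t = 0 :=
    hmoment.trans (hshift.forall_momentOnZero_eq_zero_iff_right hset hnrm hα).symm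
  have hii := hshift.exists_memK_pos_iff hset hnrm hα
  have hiii : (∀ t ∈ S, Phat P nrm α Z {ω | 0 < nrm (Theta nrm Z ω t)} = 1) ↔
      ∀ t ∈ S, ∀ s ∈ S, momentOnZero nrm α P Z s t = 0 :=
    (forall₂_congr fun t _ => hZ.phat_measure_theta_pos_eq_one_iff hnrm hα h01 t).trans
      (hshift.forall_momentOnZero_eq_zero_iff_left hset hnrm hα).symm
  refine ⟨hi.trans hii.symm, hii.trans (hshift.forall_memK_pos_iff hset hnrm hα).symm,
    hi.trans hiii.symm, fun h => ?_, fun hK => ?_⟩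
  · exact hZ.memK_theta hnrm hα hC1 h01 hset.zero_mem ((hZ.measure_pos_eq_one_iff hnrm 0).mp h)
  · exact hmoment.mpr fun s hs =>
      hZ.momentOnZero_eq_zero_of_funIdent_theta hnrm hα hC1 hK.2.2.2 hs

/-- Corollary A.5 (lem:elker): equivalent characterisations of a.s. positivity of `‖Z(0)‖`
for a shift-invariant class `K_α[Z]`. -/
theorem statement17 {l d : ℕ}
    (S : Set (Tl l)) (μT : Measure (Tl l)) (D : Set (Tl l)) (hset : Setting S μT D)
    (nrm : Ed d → ℝ) (hnrm : HomNorm nrm) (α : ℝ) (hα : 0 < α)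
    (Ω : Type) [MeasurableSpace Ω] (P : Measure Ω) [IsProbabilityMeasure P]
    (hPc : P.IsComplete)
    (Z : Ω → Path l d) (hZ : IsRF P S nrm Z)
    (hC1 : CondC1 P S nrm α Z) (hpos : PosSup P S nrm Z)
    (h01 : (∫⁻ ω, mA nrm α (Z ω 0) ∂P) = 1)
    (hshift : ShiftInvariantK P S nrm α Z) :
    -- (i) ↔ (ii) (some version)
    (P {ω | 0 < nrm (Z ω 0)} = 1 ↔
      ∃ (Ω' : Type) (_ : MeasurableSpace Ω') (P' : Measure Ω'),
        IsProbabilityMeasure P' ∧ P'.IsComplete ∧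
          ∃ Z' : Ω' → Path l d, MemK P P' S nrm α Z Z' ∧
            ∀ t ∈ S, P' {ω | 0 < nrm (Z' ω t)} = 1) ∧
    -- (ii): some version ↔ all version
    ((∃ (Ω' : Type) (_ : MeasurableSpace Ω') (P' : Measure Ω'),
        IsProbabilityMeasure P' ∧ P'.IsComplete ∧
          ∃ Z' : Ω' → Path l d, MemK P P' S nrm α Z Z' ∧
            ∀ t ∈ S, P' {ω | 0 < nrm (Z' ω t)} = 1) ↔
      (∀ (Ω' : Type) (_ : MeasurableSpace Ω') (P' : Measure Ω'),
        IsProbabilityMeasure P' → P'.IsComplete →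
        ∀ Z' : Ω' → Path l d, MemK P P' S nrm α Z Z' →
          ∀ t ∈ S, P' {ω | 0 < nrm (Z' ω t)} = 1)) ∧
    -- (i) ↔ (iii)
    (P {ω | 0 < nrm (Z ω 0)} = 1 ↔
      ∀ t ∈ S, (Phat P nrm α Z) {ω | 0 < nrm (Theta nrm Z ω t)} = 1) ∧
    -- (i) ↔ (iv)
    (P {ω | 0 < nrm (Z ω 0)} = 1 ↔
      MemK P (Phat P nrm α Z) S nrm α Z (Theta nrm Z)) :=
  statement17_general S μT D hset nrm hnrm α hα Ω P Z hZ hC1 hpos h01 hshift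

end SIRF
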